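/- Let p be a prime, k ≥ 1 and n ≥ 1, let δ : (ℤ/p^kℤ)^n → (ℤ/pℤ)^{nk} be the coordinatewise base-p digit map, and set D = (p−1)·((2p−2)^k − 1)/(2p−3) (for p = 2 read D = 2^k − 1). For every u ∈ (ℤ/p^kℤ)^n there exists a polynomial Q_u over ℤ/pℤ in nk variables of total degree at most D and of degree at most p−1 in each individual variable, such that for every a ∈ (ℤ/p^kℤ)^n one has: the scalar product a·u is nonzero in ℤ/p^kℤ if and only if Q_u evaluated at δ(a) equals 0. -/

import Mathlib

/-!
With `N = ∑ₛ val(aₛ) val(uₛ) = ∑_{s,i} val(uₛ) pⁱ δ(a)_{s,i}`, the scalar product `a·u` is the class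
of `N` modulo `p^k`, so it is nonzero iff some digit `⌊N / pʲ⌋ mod p`, `j < k`, is nonzero. By
Lucas' theorem that digit is `C(N, pʲ) mod p`, and by Vandermonde's identity `C(∑ c_v y_v, m)` is a
polynomial of total degree `≤ m` in the digits `y_v`. Hence `∏_{j<k} (1 - C(N, pʲ)^(p-1))` vanishes
exactly when `a·u ≠ 0`, and its degree is `≤ ∑ (p-1) pʲ = p^k - 1 ≤ D`. Reducing exponents modulo
`xᵖ = x` brings every partial degree below `p` without changing values or raising the total degree.
-/

/-- The `i`-th base-`p` digit of the canonical representative of `x : ZMod (p ^ k)`,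
as an element of `ZMod p`. -/
def baseDigit (p k : ℕ) (i : ℕ) (x : ZMod (p ^ k)) : ZMod p :=
  (((x.val / p ^ i) % p : ℕ) : ZMod p)

open Finset

section ReduceDegrees

variable {K : Type*} [Field K] [Fintype K] {σ : Type*}

/-- `e` reduced modulo `q - 1` into `[1, q - 1]`, except that `0` stays `0`
(`x ^ 0 = 1`, whereas `0 ^ (q - 1) = 0`). -/
def reduceExp (q e : ℕ) : ℕ := if e = 0 then 0 else (e - 1) % (q - 1) + 1

@[simp] lemma reduceExp_zero (q : ℕ) : reduceExp q 0 = 0 := rfl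

lemma reduceExp_le_self (q e : ℕ) : reduceExp q e ≤ e := by
  unfold reduceExp
  split_ifs
  · omega
  · have := Nat.mod_le (e - 1) (q - 1); omega

lemma reduceExp_le_sub_one {q : ℕ} (hq : 1 < q) (e : ℕ) : reduceExp q e ≤ q - 1 := by
  unfold reduceExp
  split_ifs
  · omega
  · have := Nat.mod_lt (e - 1) (by omega : 0 < q - 1); omega

lemma pow_reduceExp (x : K) (e : ℕ) : x ^ reduceExp (Fintype.card K) e = x ^ e := by
  unfold reduceExp
  split_ifs with he
  · rw [he]
  by_cases hx : x = 0
  · rw [hx, zero_pow (by omega), zero_pow he]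
  have hx1 : x ^ (Fintype.card K - 1) = 1 := FiniteField.pow_card_sub_one_eq_one x hx
  have he' := Nat.div_add_mod (e - 1) (Fintype.card K - 1)
  calc x ^ ((e - 1) % (Fintype.card K - 1) + 1)
      = (x ^ (Fintype.card K - 1)) ^ ((e - 1) / (Fintype.card K - 1)) *
          x ^ ((e - 1) % (Fintype.card K - 1) + 1) := by rw [hx1, one_pow, one_mul]
    _ = x ^ e := by rw [← pow_mul, ← pow_add]; congr 1; omega

noncomputable def reduceDegrees (Q : MvPolynomial σ K) : MvPolynomial σ K :=
  ∑ d ∈ Q.support,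
    MvPolynomial.monomial (d.mapRange (reduceExp (Fintype.card K)) (reduceExp_zero _)) (Q.coeff d)

lemma eval_reduceDegrees (Q : MvPolynomial σ K) (y : σ → K) :
    MvPolynomial.eval y (reduceDegrees Q) = MvPolynomial.eval y Q := by
  conv_rhs => rw [Q.as_sum]
  simp only [reduceDegrees, map_sum, MvPolynomial.eval_monomial]
  refine sum_congr rfl fun d _ => congrArg _ ?_
  rw [Finsupp.prod_mapRange_index (by simp)]
  exact Finsupp.prod_congr fun v _ => pow_reduceExp (y v) (d v)

lemma totalDegree_reduceDegrees_le (Q : MvPolynomial σ K) :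
    (reduceDegrees Q).totalDegree ≤ Q.totalDegree := by
  refine (MvPolynomial.totalDegree_finsetSum _ _).trans (Finset.sup_le fun d hd => ?_)
  refine (MvPolynomial.totalDegree_monomial_le _ _).trans ?_
  rw [Finsupp.sum_mapRange_index (by simp)]
  exact (sum_le_sum fun v _ => reduceExp_le_self _ (d v)).trans (MvPolynomial.le_totalDegree hd)

lemma degreeOf_reduceDegrees_le (Q : MvPolynomial σ K) (v : σ) :
    (reduceDegrees Q).degreeOf v ≤ Fintype.card K - 1 := by
  refine (MvPolynomial.degreeOf_sum_le _ _ _).trans (Finset.sup_le fun d _ => ?_)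
  by_cases hc : Q.coeff d = 0
  · simp [hc]
  rw [MvPolynomial.degreeOf_monomial_eq _ _ hc, Finsupp.mapRange_apply]
  exact reduceExp_le_sub_one Fintype.one_lt_card _

end ReduceDegrees

lemma MvPolynomial.totalDegree_aeval_X_le {R σ : Type*} [CommSemiring R] (g : Polynomial R)
    (w : σ) : (Polynomial.aeval (X w : MvPolynomial σ R) g).totalDegree ≤ g.natDegree := by
  rw [Polynomial.aeval_eq_sum_range]
  refine (totalDegree_finsetSum _ _).trans (Finset.sup_le fun i hi => ?_)
  refine (totalDegree_smul_le _ _).trans ((totalDegree_pow _ _).trans ?_)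
  rcases subsingleton_or_nontrivial R with hR | hR
  · simp [Subsingleton.elim (X w : MvPolynomial σ R) 0]
  rw [totalDegree_X, mul_one]
  exact Nat.lt_succ_iff.mp (mem_range.mp hi)

lemma MvPolynomial.eval_aeval_X {R σ : Type*} [CommSemiring R] (g : Polynomial R) (w : σ)
    (y : σ → R) : eval y (Polynomial.aeval (X w : MvPolynomial σ R) g) = g.eval (y w) := by
  have h := Polynomial.aeval_algHom_apply (aeval y) (X w) g
  rw [aeval_X, Polynomial.coe_aeval_eq_eval] at h
  exact h.symm

lemma Polynomial.exists_natDegree_lt_card_eval_eq {F : Type*} [Field F] [Fintype F]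
    (f : F → F) : ∃ g : Polynomial F, g.natDegree < Fintype.card F ∧ ∀ y, g.eval y = f y := by
  classical
  have hinj : Set.InjOn (id : F → F) (univ : Finset F) := Function.injective_id.injOn
  refine ⟨Lagrange.interpolate univ id f, ?_, fun y => ?_⟩
  · by_cases h0 : Lagrange.interpolate univ id f = 0
    · rw [h0, natDegree_zero]; exact Fintype.card_pos
    · exact (natDegree_lt_iff_degree_lt h0).mpr (Lagrange.degree_interpolate_lt f hinj)
  · simpa using Lagrange.eval_interpolate_at_node f hinj (mem_univ y)

section BinomialPolynomials

variable {p : ℕ} [Fact p.Prime]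

open Polynomial in
lemma exists_natDegree_le_eval_eq_choose (c i : ℕ) :
    ∃ g : Polynomial (ZMod p), g.natDegree ≤ i ∧
      ∀ y : ZMod p, g.eval y = ((c * y.val).choose i : ZMod p) := by
  rcases lt_or_ge i p with hi | hi
  · have hfac : (i.factorial : ZMod p) ≠ 0 := by
      rw [Ne, ZMod.natCast_eq_zero_iff, Nat.Prime.dvd_factorial Fact.out]
      omega
    refine ⟨C (i.factorial : ZMod p)⁻¹ * (descPochhammer (ZMod p) i).comp (C (c : ZMod p) * X),
      ?_, fun y => ?_⟩
    · refine (natDegree_C_mul_le _ _).trans ?_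
      rw [natDegree_comp, descPochhammer_natDegree]
      exact (Nat.mul_le_mul_left _ ((natDegree_C_mul_le _ _).trans natDegree_X_le)).trans
        (by simp)
    · have hcy : (c : ZMod p) * y = ((c * y.val : ℕ) : ZMod p) := by simp
      rw [eval_mul, eval_C, eval_comp, eval_mul, eval_C, eval_X, hcy,
        descPochhammer_eval_eq_descFactorial, Nat.descFactorial_eq_factorial_mul_choose,
        Nat.cast_mul, inv_mul_cancel_left₀ hfac]
  · obtain ⟨g, hg, hgf⟩ := exists_natDegree_lt_card_eval_eq
      fun y : ZMod p => ((c * y.val).choose i : ZMod p)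
    rw [ZMod.card] at hg
    exact ⟨g, by omega, hgf⟩

variable {ι : Type*}

open MvPolynomial in
lemma exists_totalDegree_le_eval_eq_choose_sum (c : ι → ℕ) (V : Finset ι) (m : ℕ) :
    ∃ F : MvPolynomial ι (ZMod p), F.totalDegree ≤ m ∧
      ∀ y, eval y F = ((∑ v ∈ V, c v * (y v).val).choose m : ZMod p) := by
  classical
  induction V using Finset.induction_on generalizing m with
  | empty =>
    exact ⟨C ((Nat.choose 0 m : ℕ) : ZMod p), (totalDegree_C _).trans_le (Nat.zero_le m), by simp⟩
  | insert w V hw ih =>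
    choose F hFdeg hFeval using ih
    choose g hgdeg hgeval using exists_natDegree_le_eval_eq_choose (p := p) (c w)
    -- Vandermonde's identity splits off the summand of `w`.
    refine ⟨∑ ij ∈ antidiagonal m, Polynomial.aeval (X w) (g ij.1) * F ij.2, ?_, fun y => ?_⟩
    · refine (totalDegree_finsetSum _ _).trans (Finset.sup_le fun ij hij => ?_)
      have := (totalDegree_aeval_X_le (g ij.1) w).trans (hgdeg ij.1)
      have := hFdeg ij.2
      have := mem_antidiagonal.mp hij
      exact (totalDegree_mul _ _).trans (by omega)
    · rw [sum_insert hw, Nat.add_choose_eq, Nat.cast_sum, map_sum]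
      refine sum_congr rfl fun ij _ => ?_
      rw [map_mul, eval_aeval_X, hgeval, hFeval, Nat.cast_mul]

lemma natCast_choose_pow_eq_natCast_div_pow (N j : ℕ) :
    ((N.choose (p ^ j) : ℕ) : ZMod p) = ((N / p ^ j : ℕ) : ZMod p) := by
  induction j generalizing N with
  | zero => simp
  | succ j ih =>
    have hp := (Fact.out : p.Prime).pos
    rw [(ZMod.natCast_eq_natCast_iff _ _ _).mpr Choose.choose_modEq_choose_mod_mul_choose_div_nat,
      pow_succ, Nat.mul_mod_left, Nat.mul_div_cancel _ hp, Nat.choose_zero_right, one_mul, ih,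
      Nat.div_div_eq_div_mul, mul_comm]

open MvPolynomial in
lemma exists_totalDegree_le_eval_eq_prod_digits [Fintype ι] (c : ι → ℕ) (k : ℕ) :
    ∃ Q : MvPolynomial ι (ZMod p), Q.totalDegree ≤ p ^ k - 1 ∧ ∀ y, eval y Q =
      ∏ j ∈ range k, (1 - (((∑ v, c v * (y v).val) / p ^ j : ℕ) : ZMod p) ^ (p - 1)) := by
  choose F hFdeg hFeval using exists_totalDegree_le_eval_eq_choose_sum (p := p) c univ
  refine ⟨∏ j ∈ range k, (1 - F (p ^ j) ^ (p - 1)), ?_, fun y => ?_⟩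
  · rw [← geom_sum_mul_of_one_le (Fact.out : p.Prime).one_le, sum_mul]
    refine (totalDegree_finsetProd _ _).trans (sum_le_sum fun j _ => ?_)
    refine (totalDegree_sub _ _).trans (max_le (by simp) ?_)
    exact (totalDegree_pow _ _).trans (by rw [mul_comm]; exact Nat.mul_le_mul_right _ (hFdeg _))
  · simp only [map_prod, map_sub, map_one, map_pow, hFeval, natCast_choose_pow_eq_natCast_div_pow]

end BinomialPolynomials

lemma Nat.sum_range_div_pow_mod_mul_pow (b m k : ℕ) :
    ∑ i ∈ range k, m / b ^ i % b * b ^ i = m % b ^ k := by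
  induction k with
  | zero => simp [Nat.mod_one]
  | succ k ih => rw [sum_range_succ, ih, pow_succ, Nat.mod_mul]; ring

section BaseDigit

variable {p k : ℕ}

lemma val_baseDigit (i : ℕ) (x : ZMod (p ^ k)) : (baseDigit p k i x).val = x.val / p ^ i % p := by
  rw [baseDigit, ZMod.val_natCast, Nat.mod_mod]

lemma val_eq_sum_baseDigit [NeZero p] (x : ZMod (p ^ k)) :
    x.val = ∑ i : Fin k, (baseDigit p k i x).val * p ^ (i : ℕ) := by
  simp only [val_baseDigit]
  rw [Fin.sum_univ_eq_sum_range (fun i => x.val / p ^ i % p * p ^ i),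
    Nat.sum_range_div_pow_mod_mul_pow, Nat.mod_eq_of_lt (ZMod.val_lt x)]

lemma baseDigit_natCast {j : ℕ} (hj : j < k) (N : ℕ) :
    baseDigit p k j (N : ZMod (p ^ k)) = ((N / p ^ j : ℕ) : ZMod p) := by
  have hpk : p ^ k = p ^ j * p ^ (k - j) := by rw [← pow_add]; congr 1; omega
  rw [baseDigit, ZMod.val_natCast, hpk, Nat.mod_mul_right_div_self,
    Nat.mod_mod_of_dvd _ (dvd_pow_self p (by omega : k - j ≠ 0)), ZMod.natCast_mod]

lemma eq_zero_iff_forall_baseDigit_eq_zero [NeZero p] (x : ZMod (p ^ k)) :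
    x = 0 ↔ ∀ j < k, baseDigit p k j x = 0 := by
  refine ⟨fun hx j _ => by simp [hx, baseDigit], fun h => ?_⟩
  rw [← ZMod.val_eq_zero, val_eq_sum_baseDigit]
  exact sum_eq_zero fun i _ => by rw [h i i.2, ZMod.val_zero, zero_mul]

end BaseDigit

lemma FiniteField.prod_one_sub_pow_card_sub_one_eq_zero_iff {K ι : Type*} [Field K] [Fintype K]
    (s : Finset ι) (d : ι → K) :
    ∏ j ∈ s, (1 - d j ^ (Fintype.card K - 1)) = 0 ↔ ∃ j ∈ s, d j ≠ 0 := by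
  rw [prod_eq_zero_iff]
  refine exists_congr fun j => and_congr_right fun _ => ?_
  by_cases hd : d j = 0
  · simp [hd, zero_pow (Nat.sub_ne_zero_of_lt Fintype.one_lt_card)]
  · simp [hd, FiniteField.pow_card_sub_one_eq_one _ hd]

lemma pow_sub_one_le_sub_one_mul_div {p : ℕ} (hp : 2 ≤ p) (k : ℕ) :
    p ^ k - 1 ≤ (p - 1) * ((2 * p - 2) ^ k - 1) / (2 * p - 3) := by
  have hgeom : (2 * p - 2) ^ k - 1 = (∑ i ∈ range k, (2 * p - 2) ^ i) * (2 * p - 3) := by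
    rw [← geom_sum_mul_of_one_le (by omega)]; congr 1
  rw [hgeom, ← mul_assoc, Nat.mul_div_cancel _ (by omega), ← geom_sum_mul_of_one_le (by omega),
    mul_comm (p - 1)]
  exact Nat.mul_le_mul_right _ (sum_le_sum fun i _ => Nat.pow_le_pow_left (by omega) i)

theorem stmt_11_general (p : ℕ) (hp : p.Prime) (k n : ℕ)
    (D : ℕ) (hD : D = (p - 1) * ((2 * p - 2) ^ k - 1) / (2 * p - 3))
    (u : Fin n → ZMod (p ^ k)) :
    ∃ Q : MvPolynomial (Fin n × Fin k) (ZMod p),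
      Q.totalDegree ≤ D ∧
        (∀ v : Fin n × Fin k, Q.degreeOf v ≤ p - 1) ∧
        ∀ a : Fin n → ZMod (p ^ k),
          ((∑ s, a s * u s) ≠ 0 ↔
            MvPolynomial.eval (fun v => baseDigit p k (v.2 : ℕ) (a v.1)) Q = 0) := by
  have : Fact p.Prime := ⟨hp⟩
  have : NeZero p := ⟨hp.ne_zero⟩
  obtain ⟨Q₀, hQ₀deg, hQ₀eval⟩ := exists_totalDegree_le_eval_eq_prod_digits (p := p)
    (fun v : Fin n × Fin k => (u v.1).val * p ^ (v.2 : ℕ)) k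
  refine ⟨reduceDegrees Q₀, ?_, fun v => ?_, fun a => ?_⟩
  · exact hD ▸ (totalDegree_reduceDegrees_le Q₀).trans
      (hQ₀deg.trans (pow_sub_one_le_sub_one_mul_div hp.two_le k))
  · simpa [ZMod.card] using degreeOf_reduceDegrees_le Q₀ v
  · have hN : ∑ v : Fin n × Fin k, (u v.1).val * p ^ (v.2 : ℕ) * (baseDigit p k v.2 (a v.1)).val
        = ∑ s, (a s).val * (u s).val := by
      refine (Fintype.sum_prod_type _).trans (sum_congr rfl fun s _ => ?_)
      rw [val_eq_sum_baseDigit (a s), sum_mul]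
      exact sum_congr rfl fun i _ => by ring
    have hx : ∑ s, a s * u s = ((∑ s, (a s).val * (u s).val : ℕ) : ZMod (p ^ k)) := by
      rw [Nat.cast_sum]
      exact sum_congr rfl fun s _ => by
        rw [Nat.cast_mul, ZMod.natCast_zmod_val, ZMod.natCast_zmod_val]
    have hfermat := FiniteField.prod_one_sub_pow_card_sub_one_eq_zero_iff (K := ZMod p) (range k)
    rw [ZMod.card] at hfermat
    rw [eval_reduceDegrees, hQ₀eval, hN, hfermat, hx, Ne, eq_zero_iff_forall_baseDigit_eq_zero]
    simp only [mem_range, not_forall, exists_prop, Ne]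
    exact exists_congr fun j => and_congr_right fun hj => by rw [baseDigit_natCast hj]

theorem stmt_11 (p : ℕ) (hp : p.Prime) (k n : ℕ) (hk : 1 ≤ k) (hn : 1 ≤ n)
    (D : ℕ) (hD : D = (p - 1) * ((2 * p - 2) ^ k - 1) / (2 * p - 3))
    (u : Fin n → ZMod (p ^ k)) :
    ∃ Q : MvPolynomial (Fin n × Fin k) (ZMod p),
      Q.totalDegree ≤ D ∧
        (∀ v : Fin n × Fin k, Q.degreeOf v ≤ p - 1) ∧
        ∀ a : Fin n → ZMod (p ^ k),
          ((∑ s, a s * u s) ≠ 0 ↔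
            MvPolynomial.eval (fun v => baseDigit p k (v.2 : ℕ) (a v.1)) Q = 0) :=
  stmt_11_general p hp k n D hD u
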